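/- arXiv:2402.08003 — 2 statements merged into one kernel-verified Lean document; each statement's English description precedes it below -/
import Mathlib

section
/- Sum-of-squares decomposition of the two-party Bell operator: Let A₀, A₁ be Hermitian n×n matrices and B₀, B₁ Hermitian m×m matrices with A₀² ⪯ Iₙ, A₁² ⪯ Iₙ, B₀² ⪯ Iₘ, B₁² ⪯ Iₘ. For a, b ∈ {0,1} define P_a = (−1)^a Ã₁ ⊗ Iₘ − Iₙ ⊗ B₁ and Q_{a,b} = (−1)^{a+b} Ã₀ ⊗ Iₘ − Iₙ ⊗ B₀. Then P_a² + Q_{a,b}² ⪯ 2 (2·I_{nm} − B̂_{a,b}) in the positive semidefinite order. -/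
/-!
Sum-of-squares decomposition of the two-party Bell operator:
`P_a² + Q_{a,b}² ⪯ 2 (2·I − B̂_{a,b})`.
-/

open Matrix Finset
open scoped Matrix Kronecker ComplexOrder

noncomputable section

/-- `tildeA A 0 = (A₀ - A₁)/√2` and `tildeA A 1 = (A₀ + A₁)/√2`. -/
def tildeA {n : Type*} (A : Fin 2 → Matrix n n ℂ) (j : Fin 2) : Matrix n n ℂ :=
  (Real.sqrt 2 : ℂ)⁻¹ • (A 0 + (-1 : ℂ) ^ ((j : ℕ) + 1) • A 1)

/-- The Bell operator `B̂_{a,b} = (−1)^a (Ã₁ ⊗ B₁ + (−1)^b Ã₀ ⊗ B₀)`. -/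
def BellOp {n m : Type*} (A : Fin 2 → Matrix n n ℂ) (B : Fin 2 → Matrix m m ℂ)
    (a b : Fin 2) : Matrix (n × m) (n × m) ℂ :=
  (-1 : ℂ) ^ (a : ℕ) • (tildeA A 1 ⊗ₖ B 1 + (-1 : ℂ) ^ (b : ℕ) • (tildeA A 0 ⊗ₖ B 0))

/-!
Expanding the squares, the cross terms of `P_a² + Q_{a,b}²` are exactly `-2 B̂_{a,b}`, and the
rotation `(A₀, A₁) ↦ (Ã₀, Ã₁)` preserves the sum of squares: `Ã₀² + Ã₁² = A₀² + A₁²`. Hence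
`2 (2 I - B̂_{a,b}) - P_a² - Q_{a,b}² = ∑ₓ (I - Aₓ²) ⊗ I + I ⊗ (I - Bₓ²)`, a sum of Kronecker
products of positive semidefinite matrices.
-/

namespace Matrix

variable {R : Type*} {l n m p : Type*}

theorem sub_kronecker [NonUnitalNonAssocRing R] (X Y : Matrix n l R) (Z : Matrix m p R) :
    (X - Y) ⊗ₖ Z = X ⊗ₖ Z - Y ⊗ₖ Z := by
  ext; simp [sub_mul]

theorem kronecker_sub [NonUnitalNonAssocRing R] (Z : Matrix m p R) (X Y : Matrix n l R) :
    Z ⊗ₖ (X - Y) = Z ⊗ₖ X - Z ⊗ₖ Y := by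
  ext; simp [mul_sub]

variable [CommRing R] [Fintype n] [Fintype m] [DecidableEq n] [DecidableEq m]

theorem commute_kronecker_one_one_kronecker (X : Matrix n n R) (Y : Matrix m m R) :
    Commute (X ⊗ₖ (1 : Matrix m m R)) ((1 : Matrix n n R) ⊗ₖ Y) := by
  simp only [Commute, SemiconjBy, ← mul_kronecker_mul, mul_one, one_mul]

theorem kronecker_one_sq (X : Matrix n n R) :
    (X ⊗ₖ (1 : Matrix m m R)) ^ 2 = (X ^ 2) ⊗ₖ 1 := by
  rw [sq, sq, ← mul_kronecker_mul, one_mul]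

theorem one_kronecker_sq (Y : Matrix m m R) :
    ((1 : Matrix n n R) ⊗ₖ Y) ^ 2 = 1 ⊗ₖ (Y ^ 2) := by
  rw [sq, sq, ← mul_kronecker_mul, one_mul]

theorem smul_kronecker_one_sub_one_kronecker_sq {c : R} (hc : c ^ 2 = 1)
    (X : Matrix n n R) (Y : Matrix m m R) :
    (c • (X ⊗ₖ (1 : Matrix m m R)) - (1 : Matrix n n R) ⊗ₖ Y) ^ 2
      = (X ^ 2) ⊗ₖ 1 + 1 ⊗ₖ (Y ^ 2) - (2 * c) • (X ⊗ₖ Y) := by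
  rw [((commute_kronecker_one_one_kronecker X Y).smul_left c).sub_sq, smul_pow, hc, one_smul,
    kronecker_one_sq, one_kronecker_sq, mul_assoc, smul_mul_assoc, ← mul_kronecker_mul,
    mul_one, one_mul, two_mul]
  module

end Matrix

theorem tildeA_zero_sq_add_tildeA_one_sq {n : Type*} [Fintype n] [DecidableEq n]
    (A : Fin 2 → Matrix n n ℂ) :
    tildeA A 0 ^ 2 + tildeA A 1 ^ 2 = A 0 ^ 2 + A 1 ^ 2 := by
  have hsqrt : ((Real.sqrt 2 : ℂ)⁻¹) ^ 2 = 2⁻¹ := by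
    rw [inv_pow, ← Complex.ofReal_pow, Real.sq_sqrt zero_le_two, Complex.ofReal_ofNat]
  have parallelogram : (A 0 - A 1) ^ 2 + (A 0 + A 1) ^ 2 = (2 : ℂ) • (A 0 ^ 2 + A 1 ^ 2) := by
    rw [two_smul]; noncomm_ring
  simp only [tildeA, Fin.val_zero, Fin.val_one, zero_add, pow_one, Nat.reduceAdd, neg_one_sq,
    neg_one_smul, one_smul, ← sub_eq_add_neg]
  rw [smul_pow, smul_pow, hsqrt, ← smul_add, parallelogram, smul_smul, inv_mul_cancel₀ two_ne_zero,
    one_smul]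

theorem sq_add_sq_eq_bellOp {n m : Type*} [Fintype n] [Fintype m] [DecidableEq n] [DecidableEq m]
    (A : Fin 2 → Matrix n n ℂ) (B : Fin 2 → Matrix m m ℂ) (a b : Fin 2) :
    ((-1 : ℂ) ^ (a : ℕ) • (tildeA A 1 ⊗ₖ (1 : Matrix m m ℂ)) - (1 : Matrix n n ℂ) ⊗ₖ B 1) ^ 2
      + ((-1 : ℂ) ^ ((a : ℕ) + (b : ℕ)) • (tildeA A 0 ⊗ₖ (1 : Matrix m m ℂ))
          - (1 : Matrix n n ℂ) ⊗ₖ B 0) ^ 2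
      = (A 0 ^ 2 + A 1 ^ 2) ⊗ₖ 1 + 1 ⊗ₖ (B 0 ^ 2 + B 1 ^ 2) - (2 : ℂ) • BellOp A B a b := by
  have hsign (k : ℕ) : ((-1 : ℂ) ^ k) ^ 2 = 1 := by rw [← pow_mul, pow_mul', neg_one_sq, one_pow]
  rw [smul_kronecker_one_sub_one_kronecker_sq (hsign _),
    smul_kronecker_one_sub_one_kronecker_sq (hsign _), ← tildeA_zero_sq_add_tildeA_one_sq,
    add_kronecker, kronecker_add, BellOp, pow_add]
  module

theorem sos_decomposition_two_party_general (n m : ℕ)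
    (A : Fin 2 → Matrix (Fin n) (Fin n) ℂ) (B : Fin 2 → Matrix (Fin m) (Fin m) ℂ)
    (hA1 : ∀ x, ((1 : Matrix (Fin n) (Fin n) ℂ) - A x ^ 2).PosSemidef)
    (hB1 : ∀ x, ((1 : Matrix (Fin m) (Fin m) ℂ) - B x ^ 2).PosSemidef)
    (a b : Fin 2) :
    ((2 : ℂ) • ((2 : ℂ) • (1 : Matrix (Fin n × Fin m) (Fin n × Fin m) ℂ) - BellOp A B a b)
      - (((-1 : ℂ) ^ (a : ℕ) • (tildeA A 1 ⊗ₖ (1 : Matrix (Fin m) (Fin m) ℂ))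
            - (1 : Matrix (Fin n) (Fin n) ℂ) ⊗ₖ B 1) ^ 2
        + ((-1 : ℂ) ^ ((a : ℕ) + (b : ℕ)) • (tildeA A 0 ⊗ₖ (1 : Matrix (Fin m) (Fin m) ℂ))
            - (1 : Matrix (Fin n) (Fin n) ℂ) ⊗ₖ B 0) ^ 2)).PosSemidef := by
  have sos : (2 : ℂ) • ((2 : ℂ) • 1 - BellOp A B a b)
      - ((A 0 ^ 2 + A 1 ^ 2) ⊗ₖ 1 + 1 ⊗ₖ (B 0 ^ 2 + B 1 ^ 2) - (2 : ℂ) • BellOp A B a b)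
      = ∑ x, ((1 - A x ^ 2) ⊗ₖ (1 : Matrix (Fin m) (Fin m) ℂ)
          + (1 : Matrix (Fin n) (Fin n) ℂ) ⊗ₖ (1 - B x ^ 2)) := by
    simp only [Fin.sum_univ_two, sub_kronecker, kronecker_sub, add_kronecker, kronecker_add,
      one_kronecker_one]
    module
  rw [sq_add_sq_eq_bellOp, sos]
  exact posSemidef_sum _ fun x _ => ((hA1 x).kronecker .one).add (PosSemidef.one.kronecker (hB1 x))

theorem sos_decomposition_two_party (n m : ℕ)
    (A : Fin 2 → Matrix (Fin n) (Fin n) ℂ) (B : Fin 2 → Matrix (Fin m) (Fin m) ℂ)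
    (hAh : ∀ x, (A x).IsHermitian) (hBh : ∀ x, (B x).IsHermitian)
    (hA1 : ∀ x, ((1 : Matrix (Fin n) (Fin n) ℂ) - A x ^ 2).PosSemidef)
    (hB1 : ∀ x, ((1 : Matrix (Fin m) (Fin m) ℂ) - B x ^ 2).PosSemidef)
    (a b : Fin 2) :
    ((2 : ℂ) • ((2 : ℂ) • (1 : Matrix (Fin n × Fin m) (Fin n × Fin m) ℂ) - BellOp A B a b)
      - (((-1 : ℂ) ^ (a : ℕ) • (tildeA A 1 ⊗ₖ (1 : Matrix (Fin m) (Fin m) ℂ))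
            - (1 : Matrix (Fin n) (Fin n) ℂ) ⊗ₖ B 1) ^ 2
        + ((-1 : ℂ) ^ ((a : ℕ) + (b : ℕ)) • (tildeA A 0 ⊗ₖ (1 : Matrix (Fin m) (Fin m) ℂ))
            - (1 : Matrix (Fin n) (Fin n) ℂ) ⊗ₖ B 0) ^ 2)).PosSemidef :=
  sos_decomposition_two_party_general n m A B hA1 hB1 a b

end
end

section
/- Sum-of-squares decomposition of the N-party Bell operator: Let N ≥ 2, let A_{1,0}, A_{1,1} be Hermitian matrices on ℂ^{d₁} and A_{n,0}, A_{n,1} Hermitian matrices on ℂ^{d_n} (n = 2,…,N), all with squares ⪯ identity. For a ∈ {0,1}^N define P_{a₁} = (−1)^{a₁} Ã_{1,1} ⊗ I − I ⊗ A_{2,1} ⊗ ⋯ ⊗ A_{N,1} and, for n = 2,…,N, Q_{a,n} = (−1)^{a₁+a_n} Ã_{1,0} ⊗ I − A_{n,0}^{(n)} ⊗ I₁ (i.e. A_{n,0} on factor n and identity elsewhere). Then (N−1) P_{a₁}² + Σ_{n=2}^{N} Q_{a,n}² ⪯ 2 [ 2(N−1)·I − B̂_a ] in the positive semidefinite order.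 -/
/-! Sum-of-squares decomposition of the N-party Bell operator. -/

open Matrix Finset
open scoped Matrix Kronecker ComplexOrder

noncomputable section

def PauliX : Matrix (Fin 2) (Fin 2) ℂ := !![0, 1; 1, 0]

def PauliZ : Matrix (Fin 2) (Fin 2) ℂ := !![1, 0; 0, -1]

/-- Kronecker product of a family of matrices, on index `Π n, p n`. -/
def famKron {N : ℕ} {p q : Fin N → Type*} (M : ∀ n, Matrix (p n) (q n) ℂ) :
    Matrix (∀ n, p n) (∀ n, q n) ℂ :=
  Matrix.of fun s t => ∏ n, M n (s n) (t n)

/-- The N-party Bell operator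
`B̂_a = (−1)^{a₁} [ (N−1) Ã_{1,1} ⊗ A_{2,1} ⊗ ⋯ ⊗ A_{N,1}
        + Σ_{n=2}^N (−1)^{a_n} Ã_{1,0} ⊗ A_{n,0}^{(n)} ]`,
where party `n` of the paper corresponds to index `n−1 : Fin N`. -/
def NBell {N : ℕ} [NeZero N] {d : Fin N → ℕ}
    (A : ∀ n, Fin 2 → Matrix (Fin (d n)) (Fin (d n)) ℂ) (a : Fin N → Fin 2) :
    Matrix (∀ n, Fin (d n)) (∀ n, Fin (d n)) ℂ :=
  (-1 : ℂ) ^ (a 0 : ℕ) •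
    (((N : ℂ) - 1) • famKron (Function.update (fun n => A n 1) 0 (tildeA (A 0) 1)) +
      ∑ n ∈ Finset.univ.erase 0, (-1 : ℂ) ^ (a n : ℕ) •
        famKron (Function.update
          (Function.update (fun m => (1 : Matrix (Fin (d m)) (Fin (d m)) ℂ))
            0 (tildeA (A 0) 0)) n (A n 0)))

/-- The GHZ-like state `|φ_a⟩ = (|a₁ … a_N⟩ + (−1)^{a₁} |1−a₁ … 1−a_N⟩)/√2`. -/
def ghz {N : ℕ} [NeZero N] (a : Fin N → Fin 2) : (Fin N → Fin 2) → ℂ := fun s =>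
  (Real.sqrt 2 : ℂ)⁻¹ *
    ((if s = a then 1 else 0) +
      (-1 : ℂ) ^ (a 0 : ℕ) * (if s = (fun n => a n + 1) then 1 else 0))

/-- `P_{a₁} = (−1)^{a₁} Ã_{1,1} ⊗ I − I ⊗ A_{2,1} ⊗ ⋯ ⊗ A_{N,1}`. -/
def SOSP {N : ℕ} [NeZero N] {d : Fin N → ℕ}
    (A : ∀ n, Fin 2 → Matrix (Fin (d n)) (Fin (d n)) ℂ) (a : Fin N → Fin 2) :
    Matrix (∀ n, Fin (d n)) (∀ n, Fin (d n)) ℂ :=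
  (-1 : ℂ) ^ (a 0 : ℕ) •
      famKron (Function.update (fun m => (1 : Matrix (Fin (d m)) (Fin (d m)) ℂ))
        0 (tildeA (A 0) 1)) -
    famKron (Function.update (fun n => A n 1) 0 (1 : Matrix (Fin (d 0)) (Fin (d 0)) ℂ))

/-- `Q_{a,n} = (−1)^{a₁+a_n} Ã_{1,0} ⊗ I − A_{n,0}^{(n)}`. -/
def SOSQ {N : ℕ} [NeZero N] {d : Fin N → ℕ}
    (A : ∀ n, Fin 2 → Matrix (Fin (d n)) (Fin (d n)) ℂ) (a : Fin N → Fin 2) (n : Fin N) :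
    Matrix (∀ n, Fin (d n)) (∀ n, Fin (d n)) ℂ :=
  (-1 : ℂ) ^ ((a 0 : ℕ) + (a n : ℕ)) •
      famKron (Function.update (fun m => (1 : Matrix (Fin (d m)) (Fin (d m)) ℂ))
        0 (tildeA (A 0) 0)) -
    famKron (Function.update (fun m => (1 : Matrix (Fin (d m)) (Fin (d m)) ℂ)) n (A n 0))

/-! For commuting `X`, `Y` and a sign `ε` one has
`2 (1 - ε X Y) = (ε X - Y)² + (1 - X²) + (1 - Y²)`. The Bell operator consists of `N - 1` copies
of `Ã_{1,1} ⊗ T`, where `T = A_{2,1} ⊗ ⋯ ⊗ A_{N,1}`, and one term `Ã_{1,0} ⊗ A_{n,0}^{(n)}` for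
each `n ≥ 2`, all products of two commuting factors. Pairing each copy of the first term with one
of the others, the identity leaves the remainder
`∑ₙ [(2 - Ã_{1,0}² - Ã_{1,1}²) + (1 - T²) + (1 - (A_{n,0}^{(n)})²)]`. Every summand is positive
semidefinite: `Ã_{1,0}² + Ã_{1,1}² = A_{1,0}² + A_{1,1}²`, and a tensor product of Hermitian
contractions is again a contraction. -/

section famKron

variable {N : ℕ} {p : Fin N → Type*}

theorem famKron_update_apply {q : Fin N → Type*} (M : ∀ n, Matrix (p n) (q n) ℂ) (k : Fin N)
    (X : Matrix (p k) (q k) ℂ) (s : ∀ n, p n) (t : ∀ n, q n) :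
    famKron (Function.update M k X) s t = X (s k) (t k) * ∏ n ∈ univ.erase k, M n (s n) (t n) := by
  rw [famKron, of_apply, ← mul_prod_erase univ _ (mem_univ k), Function.update_self]
  congr 1
  exact prod_congr rfl fun n hn => by rw [Function.update_of_ne (ne_of_mem_erase hn)]

theorem famKron_mul [∀ n, Fintype (p n)] (M M' : ∀ n, Matrix (p n) (p n) ℂ) :
    famKron M * famKron M' = famKron (M * M') := by
  ext s t
  simp only [famKron, mul_apply, of_apply, Pi.mul_apply, ← prod_mul_distrib]
  exact (Fintype.prod_sum fun n u => M n (s n) u * M' n u (t n)).symm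

theorem famKron_update_mul_update [∀ n, Fintype (p n)] (M M' : ∀ n, Matrix (p n) (p n) ℂ)
    (k : Fin N) (X Y : Matrix (p k) (p k) ℂ) :
    famKron (Function.update M k X) * famKron (Function.update M' k Y) =
      famKron (Function.update (M * M') k (X * Y)) := by
  rw [famKron_mul, Function.update_mul]

theorem famKron_one [∀ n, DecidableEq (p n)] :
    famKron (1 : ∀ n, Matrix (p n) (p n) ℂ) = 1 := by
  ext s t
  simp only [famKron, of_apply, Pi.one_apply, one_apply]
  split_ifs with h
  · simp [h]
  · obtain ⟨n, hn⟩ := Function.ne_iff.mp h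
    exact prod_eq_zero (mem_univ n) (one_apply_ne hn)

theorem famKron_conjTranspose (M : ∀ n, Matrix (p n) (p n) ℂ) :
    (famKron M)ᴴ = famKron fun n => (M n)ᴴ := by
  ext s t
  simp only [famKron, conjTranspose_apply, of_apply, star_prod]

open scoped MatrixOrder in
theorem posSemidef_famKron [∀ n, Fintype (p n)] {M : ∀ n, Matrix (p n) (p n) ℂ}
    (hM : ∀ n, (M n).PosSemidef) : (famKron M).PosSemidef := by
  classical
  choose B hB using fun n => CStarAlgebra.nonneg_iff_eq_star_mul_self.mp (hM n).nonneg
  rw [show M = (fun n => (B n)ᴴ) * B from funext hB, ← famKron_mul, ← famKron_conjTranspose]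
  exact posSemidef_conjTranspose_mul_self _

end famKron

theorem Matrix.IsHermitian.posSemidef_mul_self {m R : Type*} [Fintype m] [CommRing R]
    [PartialOrder R] [StarRing R] [StarOrderedRing R] {X : Matrix m m R} (hX : X.IsHermitian) :
    (X * X).PosSemidef := by
  simpa only [hX.eq] using posSemidef_conjTranspose_mul_self X

section onFactor

variable {N : ℕ} {p : Fin N → Type*} [∀ n, Fintype (p n)] [∀ n, DecidableEq (p n)]

/-- The paper's `X^{(k)}`. -/
def onFactor (k : Fin N) : Matrix (p k) (p k) ℂ →ₐ[ℂ] Matrix (∀ n, p n) (∀ n, p n) ℂ :=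
  AlgHom.ofLinearMap
    { toFun X := famKron (Function.update 1 k X)
      map_add' X Y := by
        ext s t
        simp only [Matrix.add_apply, famKron_update_apply, add_mul]
      map_smul' c X := by
        ext s t
        simp only [Matrix.smul_apply, famKron_update_apply, smul_eq_mul, mul_assoc,
          RingHom.id_apply] }
    (by simp [famKron_one])
    (fun X Y => by
      simp only [LinearMap.coe_mk, AddHom.coe_mk, famKron_update_mul_update, mul_one])

theorem onFactor_apply (k : Fin N) (X : Matrix (p k) (p k) ℂ) :
    onFactor k X = famKron (Function.update 1 k X) := rfl

theorem onFactor_mul_famKron_update (M : ∀ n, Matrix (p n) (p n) ℂ) (k : Fin N)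
    (X Y : Matrix (p k) (p k) ℂ) :
    onFactor k X * famKron (Function.update M k Y) = famKron (Function.update M k (X * Y)) := by
  rw [onFactor_apply, famKron_update_mul_update, one_mul]

theorem famKron_update_mul_onFactor (M : ∀ n, Matrix (p n) (p n) ℂ) (k : Fin N)
    (X Y : Matrix (p k) (p k) ℂ) :
    famKron (Function.update M k Y) * onFactor k X = famKron (Function.update M k (Y * X)) := by
  rw [onFactor_apply, famKron_update_mul_update, mul_one]

theorem famKron_update_eq_onFactor_mul (M : ∀ n, Matrix (p n) (p n) ℂ) (k : Fin N)
    (X : Matrix (p k) (p k) ℂ) :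
    famKron (Function.update M k X) = onFactor k X * famKron (Function.update M k 1) := by
  rw [onFactor_mul_famKron_update, mul_one]

theorem commute_onFactor_famKron_update (M : ∀ n, Matrix (p n) (p n) ℂ) (k : Fin N)
    (X : Matrix (p k) (p k) ℂ) : Commute (onFactor k X) (famKron (Function.update M k 1)) := by
  rw [Commute, SemiconjBy, onFactor_mul_famKron_update, famKron_update_mul_onFactor, mul_one,
    one_mul]

theorem onFactor_mul_onFactor_of_ne {k l : Fin N} (hkl : k ≠ l) (X : Matrix (p k) (p k) ℂ)
    (Y : Matrix (p l) (p l) ℂ) :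
    onFactor k X * onFactor l Y = famKron (Function.update (Function.update 1 k X) l Y) := by
  have hl : Function.update (Function.update (1 : ∀ n, Matrix (p n) (p n) ℂ) k X) l 1 =
      Function.update (1 : ∀ n, Matrix (p n) (p n) ℂ) k X := by
    rw [Function.update_eq_self_iff, Function.update_of_ne hkl.symm, Pi.one_apply]
  conv_lhs => rw [onFactor_apply k, ← hl, famKron_update_mul_onFactor, one_mul]

theorem commute_onFactor_of_ne {k l : Fin N} (hkl : k ≠ l) (X : Matrix (p k) (p k) ℂ)
    (Y : Matrix (p l) (p l) ℂ) : Commute (onFactor k X) (onFactor l Y) := by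
  rw [Commute, SemiconjBy, onFactor_mul_onFactor_of_ne hkl, onFactor_mul_onFactor_of_ne hkl.symm,
    Function.update_comm hkl.symm]

theorem onFactor_posSemidef (k : Fin N) {X : Matrix (p k) (p k) ℂ} (hX : X.PosSemidef) :
    (onFactor k X).PosSemidef :=
  posSemidef_famKron <|
    (Function.forall_update_iff _ fun n (Y : Matrix (p n) (p n) ℂ) => Y.PosSemidef).2
      ⟨hX, fun _ _ => PosSemidef.one⟩

theorem posSemidef_one_sub_famKron {M : ∀ n, Matrix (p n) (p n) ℂ}
    (h0 : ∀ n, (M n).PosSemidef) (h1 : ∀ n, (1 - M n).PosSemidef) :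
    (1 - famKron M).PosSemidef := by
  suffices ∀ s : Finset (Fin N), (1 - famKron (s.piecewise M 1)).PosSemidef by
    simpa using this univ
  intro s
  induction s using Finset.induction_on with
  | empty => simpa [famKron_one] using PosSemidef.zero
  | insert k s hk ih =>
    set P := s.piecewise M 1
    have hPk : Function.update P k 1 = P := by
      rw [Function.update_eq_self_iff]
      exact (piecewise_eq_of_notMem s M 1 hk).symm
    have hsplit : 1 - famKron (Function.update P k (M k)) =
        (1 - famKron P) + famKron (Function.update P k (1 - M k)) := by
      rw [famKron_update_eq_onFactor_mul P k (M k), famKron_update_eq_onFactor_mul P k (1 - M k),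
        hPk, map_sub, map_one, sub_mul, one_mul]
      abel
    rw [piecewise_insert, hsplit]
    refine ih.add (posSemidef_famKron ?_)
    refine (Function.forall_update_iff _ fun n (Y : Matrix (p n) (p n) ℂ) => Y.PosSemidef).2
      ⟨h1 k, fun n _ => ?_⟩
    exact piecewise_cases s M 1 (fun Y : Matrix (p n) (p n) ℂ => Y.PosSemidef) (h0 n) .one

theorem posSemidef_one_sub_famKron_sq {M : ∀ n, Matrix (p n) (p n) ℂ}
    (hM : ∀ n, (M n).IsHermitian) (h1 : ∀ n, (1 - M n ^ 2).PosSemidef) :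
    (1 - famKron M ^ 2).PosSemidef := by
  rw [sq, famKron_mul]
  exact posSemidef_one_sub_famKron (fun n => (hM n).posSemidef_mul_self)
    (fun n => by simpa only [Pi.mul_apply, sq] using h1 n)

end onFactor

section identity

variable {𝕜 R : Type*} [CommRing 𝕜] [Ring R] [Algebra 𝕜 R]

theorem two_smul_one_sub_smul_mul_eq {X Y : R} (hXY : Commute X Y) {ε : 𝕜} (hε : ε * ε = 1) :
    (2 : 𝕜) • (1 - ε • (X * Y)) = (ε • X - Y) ^ 2 + (1 - X ^ 2) + (1 - Y ^ 2) := by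
  simp only [sq, sub_mul, mul_sub, smul_mul_assoc, mul_smul_comm, ← hXY.eq]
  linear_combination (norm := module) (-hε) • (X * X)

theorem bell_sos_identity {ι : Type*} (s : Finset ι) {ε : 𝕜} (hε : ε * ε = 1) {εf : ι → 𝕜}
    (hεf : ∀ n, εf n * εf n = 1) {K₀ K₁ T : R} {Rf : ι → R} (hK₁T : Commute K₁ T)
    (hK₀R : ∀ n ∈ s, Commute K₀ (Rf n)) :
    (2 : 𝕜) • ((2 * (#s : 𝕜)) • 1 - ε • ((#s : 𝕜) • (K₁ * T) + ∑ n ∈ s, εf n • (K₀ * Rf n)))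
      - ((#s : 𝕜) • (ε • K₁ - T) ^ 2 + ∑ n ∈ s, ((ε * εf n) • K₀ - Rf n) ^ 2)
    = ∑ n ∈ s, ((1 - K₀ ^ 2) + (1 - K₁ ^ 2) + (1 - T ^ 2) + (1 - Rf n ^ 2)) := by
  have hterm : ∀ n ∈ s, (2 : 𝕜) • ((2 : 𝕜) • 1 - ε • (K₁ * T + εf n • (K₀ * Rf n)))
      - ((ε • K₁ - T) ^ 2 + ((ε * εf n) • K₀ - Rf n) ^ 2)
      = (1 - K₀ ^ 2) + (1 - K₁ ^ 2) + (1 - T ^ 2) + (1 - Rf n ^ 2) := fun n hn => by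
    have hεn : (ε * εf n) * (ε * εf n) = 1 := by
      rw [mul_mul_mul_comm, hε, hεf, one_mul]
    linear_combination (norm := module)
      two_smul_one_sub_smul_mul_eq hK₁T hε + two_smul_one_sub_smul_mul_eq (hK₀R n hn) hεn
  rw [← sum_congr rfl hterm]
  simp only [smul_sub, smul_add, sum_sub_distrib, sum_add_distrib, sum_const, ← smul_sum,
    ← Nat.cast_smul_eq_nsmul 𝕜]
  module

end identity

theorem tildeA_sq_add_tildeA_sq {m : Type*} [Fintype m] [DecidableEq m]
    (A : Fin 2 → Matrix m m ℂ) : tildeA A 0 ^ 2 + tildeA A 1 ^ 2 = A 0 ^ 2 + A 1 ^ 2 := by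
  have h0 : tildeA A 0 = (Real.sqrt 2 : ℂ)⁻¹ • (A 0 - A 1) := by
    simp [tildeA, sub_eq_add_neg]
  have h1 : tildeA A 1 = (Real.sqrt 2 : ℂ)⁻¹ • (A 0 + A 1) := by
    simp [tildeA]
  have hparallelogram : (A 0 - A 1) ^ 2 + (A 0 + A 1) ^ 2 = (2 : ℂ) • (A 0 ^ 2 + A 1 ^ 2) := by
    rw [two_smul]
    noncomm_ring
  have hsqrt : ((Real.sqrt 2 : ℂ)⁻¹) ^ 2 * 2 = 1 := by
    rw [inv_pow, ← Complex.ofReal_pow, Real.sq_sqrt zero_le_two]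
    norm_num
  rw [h0, h1, smul_pow, smul_pow, ← smul_add, hparallelogram, smul_smul, hsqrt, one_smul]

section bell

variable {N : ℕ} [NeZero N] {d : Fin N → ℕ} (A : ∀ n, Fin 2 → Matrix (Fin (d n)) (Fin (d n)) ℂ)
  (a : Fin N → Fin 2)

theorem NBell_eq : NBell A a = (-1 : ℂ) ^ (a 0 : ℕ) •
    (((N : ℂ) - 1) •
        (onFactor 0 (tildeA (A 0) 1) * famKron (Function.update (fun n => A n 1) 0 1)) +
      ∑ n ∈ univ.erase 0, (-1 : ℂ) ^ (a n : ℕ) •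
        (onFactor 0 (tildeA (A 0) 0) * onFactor n (A n 0))) := by
  rw [onFactor_mul_famKron_update, mul_one,
    sum_congr rfl fun n hn => by rw [onFactor_mul_onFactor_of_ne (ne_of_mem_erase hn).symm]]
  rfl

theorem SOSP_eq : SOSP A a = (-1 : ℂ) ^ (a 0 : ℕ) • onFactor 0 (tildeA (A 0) 1) -
    famKron (Function.update (fun n => A n 1) 0 1) := rfl

theorem SOSQ_eq (n : Fin N) : SOSQ A a n =
    ((-1 : ℂ) ^ (a 0 : ℕ) * (-1 : ℂ) ^ (a n : ℕ)) • onFactor 0 (tildeA (A 0) 0) -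
      onFactor n (A n 0) := by
  rw [SOSQ, pow_add]
  rfl

variable {A}

theorem bell_sos_term_posSemidef (hAh : ∀ n x, (A n x).IsHermitian)
    (hAc : ∀ n x, ((1 : Matrix (Fin (d n)) (Fin (d n)) ℂ) - A n x ^ 2).PosSemidef) (n : Fin N) :
    (((1 : Matrix (∀ n, Fin (d n)) (∀ n, Fin (d n)) ℂ) - onFactor 0 (tildeA (A 0) 0) ^ 2) +
      (1 - onFactor 0 (tildeA (A 0) 1) ^ 2) +
      (1 - famKron (Function.update (fun n => A n 1) 0 1) ^ 2) +
      (1 - onFactor n (A n 0) ^ 2)).PosSemidef := by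
  have hparty0 :
      ((1 : Matrix (∀ n, Fin (d n)) (∀ n, Fin (d n)) ℂ) - onFactor 0 (tildeA (A 0) 0) ^ 2) +
        (1 - onFactor 0 (tildeA (A 0) 1) ^ 2) =
      onFactor 0 ((1 - A 0 0 ^ 2) + (1 - A 0 1 ^ 2) : Matrix (Fin (d 0)) (Fin (d 0)) ℂ) := by
    rw [sub_add_sub_comm, sub_add_sub_comm, ← tildeA_sq_add_tildeA_sq, map_sub, map_add, map_add,
      map_one, map_pow, map_pow]
  have hT : (1 - famKron (Function.update (fun n => A n 1) 0 1) ^ 2).PosSemidef :=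
    posSemidef_one_sub_famKron_sq
      ((Function.forall_update_iff _ fun m (Y : Matrix (Fin (d m)) (Fin (d m)) ℂ) =>
        Y.IsHermitian).2 ⟨isHermitian_one, fun m _ => hAh m 1⟩)
      ((Function.forall_update_iff _ fun m (Y : Matrix (Fin (d m)) (Fin (d m)) ℂ) =>
        (1 - Y ^ 2).PosSemidef).2 ⟨by simpa using PosSemidef.zero, fun m _ => hAc m 1⟩)
  have hRn : ((1 : Matrix (∀ n, Fin (d n)) (∀ n, Fin (d n)) ℂ) -
      onFactor n (A n 0) ^ 2).PosSemidef := by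
    rw [← map_pow, ← map_one (onFactor n), ← map_sub]
    exact onFactor_posSemidef n (hAc n 0)
  rw [hparty0]
  exact ((onFactor_posSemidef 0 ((hAc 0 0).add (hAc 0 1))).add hT).add hRn

end bell

theorem sos_decomposition_N_party_general (N : ℕ) [NeZero N] (d : Fin N → ℕ)
    (A : ∀ n, Fin 2 → Matrix (Fin (d n)) (Fin (d n)) ℂ)
    (hAh : ∀ n x, (A n x).IsHermitian)
    (hAc : ∀ n x, ((1 : Matrix (Fin (d n)) (Fin (d n)) ℂ) - A n x ^ 2).PosSemidef)
    (a : Fin N → Fin 2) :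
    ((2 : ℂ) • ((2 * ((N : ℂ) - 1)) • (1 : Matrix (∀ n, Fin (d n)) (∀ n, Fin (d n)) ℂ)
          - NBell A a)
      - (((N : ℂ) - 1) • SOSP A a ^ 2
          + ∑ n ∈ Finset.univ.erase 0, SOSQ A a n ^ 2)).PosSemidef := by
  have hcard : (#(univ.erase (0 : Fin N)) : ℂ) = N - 1 := by
    rw [card_erase_of_mem (mem_univ _), card_univ, Fintype.card_fin, Nat.cast_pred (NeZero.pos N)]
  have hsign (k : ℕ) : (-1 : ℂ) ^ k * (-1 : ℂ) ^ k = 1 := by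
    rw [← mul_pow, neg_one_mul, neg_neg, one_pow]
  simp only [NBell_eq, SOSP_eq, SOSQ_eq]
  rw [← hcard, bell_sos_identity _ (hsign _) (fun n => hsign _)
    (commute_onFactor_famKron_update _ _ _)
    fun n hn => commute_onFactor_of_ne (ne_of_mem_erase hn).symm _ _]
  exact posSemidef_sum _ fun n _ => bell_sos_term_posSemidef hAh hAc n

theorem sos_decomposition_N_party (N : ℕ) [NeZero N] (hN : 2 ≤ N) (d : Fin N → ℕ)
    (A : ∀ n, Fin 2 → Matrix (Fin (d n)) (Fin (d n)) ℂ)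
    (hAh : ∀ n x, (A n x).IsHermitian)
    (hAc : ∀ n x, ((1 : Matrix (Fin (d n)) (Fin (d n)) ℂ) - A n x ^ 2).PosSemidef)
    (a : Fin N → Fin 2) :
    ((2 : ℂ) • ((2 * ((N : ℂ) - 1)) • (1 : Matrix (∀ n, Fin (d n)) (∀ n, Fin (d n)) ℂ)
          - NBell A a)
      - (((N : ℂ) - 1) • SOSP A a ^ 2
          + ∑ n ∈ Finset.univ.erase 0, SOSQ A a n ^ 2)).PosSemidef :=
  sos_decomposition_N_party_general N d A hAh hAc a

end
end
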